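/- Let k be a field, 𝔤 a finite-dimensional k-vector space with a nondegenerate symmetric bilinear form κ, and 𝔟 ⊆ 𝔤 a subspace whose orthogonal complement 𝔫 := 𝔟^⊥ satisfies 𝔫 ⊆ 𝔟. Set 𝔱 := 𝔟/𝔫. Then the sequence 0 → 𝔟 → 𝔤 ⊕ 𝔱 → 𝔟* → 0 is exact, where the first map sends x ∈ 𝔟 to (x, x mod 𝔫) and the second sends (g, t̄) to the functional κ(g, −)|_𝔟 − ⟨t̄, −⟩, with ⟨·,·⟩ the pairing 𝔱 × 𝔟 → k induced by κ (well-defined since 𝔫 = 𝔟^⊥). In particular (𝔤 ⊕ 𝔱)/𝔟 ≅ 𝔟*. (This is the self-dual exact sequence 0 → 𝔟 → 𝔤 ⊕ 𝔱 → 𝔟^∨ → 0 of B-modules whose associated-bundle version underlies the symplectic structure on the Feigin–Odesskii moduli space.) -/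

import Mathlib

/-!
A left-nondegenerate form on a finite-dimensional space identifies `𝔤` with `𝔤*`, and restriction
`𝔤* → 𝔟*` is onto, so already `g ↦ κ(g, -)|_𝔟` hits every functional. In the middle, if
`κ(g, -)|_𝔟 = ⟨x mod 𝔫, -⟩ = κ(x, -)|_𝔟` then `g - x ∈ 𝔟^⊥ = 𝔫 ⊆ 𝔟`, so `g ∈ 𝔟` and
`(g, x mod 𝔫) = (g, g mod 𝔫)` is in the image of `𝔟`.
-/

namespace LinearMap

theorem prod_injective_of_injective_left {R M M₂ M₃ : Type*} [Semiring R] [AddCommMonoid M]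
    [AddCommMonoid M₂] [AddCommMonoid M₃] [Module R M] [Module R M₂] [Module R M₃]
    {f : M →ₗ[R] M₂} (g : M →ₗ[R] M₃) (hf : Function.Injective f) :
    Function.Injective (f.prod g) :=
  fun _ _ h ↦ hf (congrArg Prod.fst h)

theorem coprod_surjective_of_surjective_left {R M M₂ M₃ : Type*} [Semiring R] [AddCommMonoid M]
    [AddCommMonoid M₂] [AddCommMonoid M₃] [Module R M] [Module R M₂] [Module R M₃]
    {f : M →ₗ[R] M₃} (g : M₂ →ₗ[R] M₃) (hf : Function.Surjective f) :
    Function.Surjective (f.coprod g) := fun y ↦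
  let ⟨x, hx⟩ := hf y
  ⟨(x, 0), by simp [hx]⟩

variable {k V W : Type*} [Field k] [AddCommGroup V] [Module k V] [AddCommGroup W] [Module k W]

theorem surjective_of_separatingLeft [FiniteDimensional k V] {κ : V →ₗ[k] V →ₗ[k] k}
    (hκ : κ.SeparatingLeft) : Function.Surjective κ :=
  (injective_iff_surjective_of_finrank_eq_finrank Subspace.dual_finrank_eq.symm).mp
    (ker_eq_bot.mp (separatingLeft_iff_ker_eq_bot.mp hκ))

theorem compl₂_subtype_surjective {κ : V →ₗ[k] W →ₗ[k] k} (hκ : Function.Surjective κ)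
    (U : Submodule k W) : Function.Surjective (κ.compl₂ U.subtype) :=
  (dualMap_surjective_of_injective U.injective_subtype).comp hκ

end LinearMap

section Exactness

variable {k V : Type*} [Field k] [AddCommGroup V] [Module k V] {κ : V →ₗ[k] V →ₗ[k] k}
  {𝔟 𝔫 : Submodule k V} {p : (𝔟 ⧸ 𝔫.comap 𝔟.subtype) →ₗ[k] (𝔟 →ₗ[k] k)}

theorem range_subtype_prod_mkQ_le_ker_coprod
    (hp : ∀ x y : 𝔟, p (Submodule.Quotient.mk x) y = κ x y) :
    LinearMap.range (𝔟.subtype.prod (𝔫.comap 𝔟.subtype).mkQ) ≤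
      LinearMap.ker ((κ.compl₂ 𝔟.subtype).coprod (-p)) := by
  rintro _ ⟨x, rfl⟩
  ext y
  simp [hp x y]

theorem ker_coprod_le_range_subtype_prod_mkQ (h𝔫 : ∀ g : V, g ∈ 𝔫 ↔ ∀ x ∈ 𝔟, κ g x = 0)
    (hsub : 𝔫 ≤ 𝔟) (hp : ∀ x y : 𝔟, p (Submodule.Quotient.mk x) y = κ x y) :
    LinearMap.ker ((κ.compl₂ 𝔟.subtype).coprod (-p)) ≤
      LinearMap.range (𝔟.subtype.prod (𝔫.comap 𝔟.subtype).mkQ) := by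
  rintro ⟨g, t⟩ ht
  obtain ⟨x, rfl⟩ := Submodule.mkQ_surjective _ t
  have hgx : g - x ∈ 𝔫 := by
    refine (h𝔫 _).mpr fun y hy ↦ ?_
    have hgy := LinearMap.congr_fun (LinearMap.mem_ker.mp ht) ⟨y, hy⟩
    simpa [hp x ⟨y, hy⟩, ← sub_eq_add_neg] using hgy
  have hg : g ∈ 𝔟 := by simpa using 𝔟.add_mem (hsub hgx) x.2
  refine ⟨⟨g, hg⟩, Prod.ext rfl ?_⟩
  simpa [Submodule.Quotient.eq] using hgx

end Exactness

theorem stmt_16_general (k : Type*) [Field k] (𝔤 : Type*) [AddCommGroup 𝔤] [Module k 𝔤]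
    [FiniteDimensional k 𝔤]
    (κ : 𝔤 →ₗ[k] 𝔤 →ₗ[k] k)
    (hnondeg : ∀ g : 𝔤, (∀ x : 𝔤, κ g x = 0) → g = 0)
    (𝔟 𝔫 : Submodule k 𝔤)
    (h𝔫 : ∀ g : 𝔤, g ∈ 𝔫 ↔ ∀ x ∈ 𝔟, κ g x = 0)
    (hsub : 𝔫 ≤ 𝔟)
    -- the pairing 𝔱 × 𝔟 → k induced by κ (well defined since κ(𝔫, 𝔟) = 0)
    (p : (𝔟 ⧸ 𝔫.comap 𝔟.subtype) →ₗ[k] (𝔟 →ₗ[k] k))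
    (hp : ∀ x y : 𝔟, p (Submodule.Quotient.mk x) y = κ (x : 𝔤) (y : 𝔤)) :
    Function.Injective
        ((𝔟.subtype).prod (𝔫.comap 𝔟.subtype).mkQ) ∧
    Function.Surjective ((κ.compl₂ 𝔟.subtype).coprod (-p)) ∧
    LinearMap.range ((𝔟.subtype).prod (𝔫.comap 𝔟.subtype).mkQ) =
      LinearMap.ker ((κ.compl₂ 𝔟.subtype).coprod (-p)) :=
  ⟨LinearMap.prod_injective_of_injective_left _ 𝔟.injective_subtype,
    LinearMap.coprod_surjective_of_surjective_left _
      (LinearMap.compl₂_subtype_surjective (LinearMap.surjective_of_separatingLeft hnondeg) 𝔟),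
    le_antisymm (range_subtype_prod_mkQ_le_ker_coprod hp)
      (ker_coprod_le_range_subtype_prod_mkQ h𝔫 hsub hp)⟩

theorem stmt_16 (k : Type*) [Field k] (𝔤 : Type*) [AddCommGroup 𝔤] [Module k 𝔤]
    [FiniteDimensional k 𝔤]
    (κ : 𝔤 →ₗ[k] 𝔤 →ₗ[k] k)
    (hsymm : ∀ x y : 𝔤, κ x y = κ y x)
    (hnondeg : ∀ g : 𝔤, (∀ x : 𝔤, κ g x = 0) → g = 0)
    (𝔟 𝔫 : Submodule k 𝔤)
    (h𝔫 : ∀ g : 𝔤, g ∈ 𝔫 ↔ ∀ x ∈ 𝔟, κ g x = 0)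
    (hsub : 𝔫 ≤ 𝔟)
    -- the pairing 𝔱 × 𝔟 → k induced by κ (well defined since κ(𝔫, 𝔟) = 0)
    (p : (𝔟 ⧸ 𝔫.comap 𝔟.subtype) →ₗ[k] (𝔟 →ₗ[k] k))
    (hp : ∀ x y : 𝔟, p (Submodule.Quotient.mk x) y = κ (x : 𝔤) (y : 𝔤)) :
    Function.Injective
        ((𝔟.subtype).prod (𝔫.comap 𝔟.subtype).mkQ) ∧
    Function.Surjective ((κ.compl₂ 𝔟.subtype).coprod (-p)) ∧
    LinearMap.range ((𝔟.subtype).prod (𝔫.comap 𝔟.subtype).mkQ) =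
      LinearMap.ker ((κ.compl₂ 𝔟.subtype).coprod (-p)) :=
  stmt_16_general k 𝔤 κ hnondeg 𝔟 𝔫 h𝔫 hsub p hp
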